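/- The space of continuous paths (Π, d), where Π consists of all paths in the compactified space-time plane R²_c with arbitrary starting times in [-∞,∞], and d is the metric d(π₁,π₂) = |tanh(σ_{π₁}) − tanh(σ_{π₂})| ∨ sup_{t ≥ σ_{π₁}∧σ_{π₂}} |tanh(π₁(t∨σ_{π₁}))/(1+|t|) − tanh(π₂(t∨σ_{π₂}))/(1+|t|)|, is a complete separable metric space. -/

import Mathlib

/- The compactification `R²_c` of the space-time plane, realized concretely as the
closure in `ℝ × ℝ` (with the sup metric) of the image of `ℝ²` under the embedding
`(x,t) ↦ (tanh x / (1+|t|), tanh t)`, so that the metric `ρ` of the paper is the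
product (max) metric of `ℝ × ℝ` restricted to this set. -/
noncomputable def netEmbed : ℝ × ℝ → ℝ × ℝ :=
  fun p => (Real.tanh p.1 / (1 + |p.2|), Real.tanh p.2)

noncomputable def Rc2 : Set (ℝ × ℝ) := closure (Set.range netEmbed)

/- A path in the Brownian-web/net path space `Π`, in compactified coordinates:
`σ ∈ [-1,1]` is the tanh of the starting time, and `f s` represents
`tanh(π(t))/(1+|t|)` where `s = tanh t`.  The conditions state that the trajectory
`s ↦ (f s, s)` is a continuous map into `R²_c` on `[σ,1]`, that the path takes the
value `*` (encoded by first coordinate `0`) at time `+∞`, and at the starting time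
if the latter is `-∞`; outside `[σ,1]` the function `f` is normalized by constancy,
which encodes the convention `π(t ∨ σ_π)` in the definition of the metric `d`. -/
structure NetPath where
  σ : ℝ
  hσ : σ ∈ Set.Icc (-1 : ℝ) 1
  f : ℝ → ℝ
  cont : ContinuousOn f (Set.Icc σ 1)
  mem : ∀ s ∈ Set.Icc σ 1, (f s, s) ∈ Rc2
  eval_top : f 1 = 0
  eval_bot : σ = -1 → f (-1) = 0
  extend : ∀ s : ℝ, f s = f (max σ (min s 1))


/-! In compactified coordinates a path is a pair `(σ, f)` with `f` constant outside `[σ, 1]`,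
so it is determined by `σ` and `f|[-1,1]`, and `d` is the metric induced by the embedding
`π ↦ (σ, f|[-1,1])` into the complete separable space `ℝ × C([-1,1], ℝ)`. The image is cut out
by closed conditions, evaluation `(g, u) ↦ g u` being jointly continuous. The value `*` at
`σ = -∞` need not be imposed: `R²_c` meets the line of time `-∞` only at `0`, because a point
`(tanh x / (1 + |t|), tanh t)` with `t < -T` has first coordinate at most `1 / (1 + T)` in
absolute value. So the image is closed, and `Π` is complete and separable. -/

open Set Topology

theorem Real.tanh_strictMono : StrictMono Real.tanh := fun a b hab => by
  have hmem : ∀ x, Real.tanh x ∈ Ioo (-1) 1 := fun x =>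
    ⟨Real.neg_one_lt_tanh x, Real.tanh_lt_one x⟩
  rwa [← Real.artanh_lt_artanh_iff (hmem a) (hmem b), Real.artanh_tanh, Real.artanh_tanh]

theorem mul_abs_fst_le_one_of_mem_Rc2 {a s : ℝ} (h : (a, s) ∈ Rc2) (T : ℝ)
    (hs : s < Real.tanh (-T)) : (1 + T) * |a| ≤ 1 := by
  set C : Set (ℝ × ℝ) := {p | Real.tanh (-T) ≤ p.2} ∪ {p | (1 + T) * |p.1| ≤ 1}
  have hC : IsClosed C :=
    (isClosed_le continuous_const continuous_snd).union (isClosed_le (by fun_prop) continuous_const)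
  have hrange : range netEmbed ⊆ C := by
    rintro _ ⟨⟨x, t⟩, rfl⟩
    by_cases ht : Real.tanh (-T) ≤ Real.tanh t
    · exact Or.inl ht
    · have hT : T ≤ |t| := by
        have := Real.tanh_strictMono.lt_iff_lt.1 (not_le.1 ht)
        linarith [neg_le_abs t]
      have ht_pos : 0 < 1 + |t| := by positivity
      refine Or.inr ?_
      calc (1 + T) * |Real.tanh x / (1 + |t|)|
          ≤ (1 + |t|) * |Real.tanh x / (1 + |t|)| := by gcongr
        _ = |Real.tanh x| := by rw [abs_div, abs_of_pos ht_pos]; field_simp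
        _ ≤ 1 := (Real.abs_tanh_lt_one x).le
  rcases closure_minimal hrange hC h with h | h
  · exact absurd h (not_le.2 hs)
  · exact h

theorem eq_zero_of_mem_Rc2_neg_one {a : ℝ} (h : (a, -1) ∈ Rc2) : a = 0 := by
  by_contra ha
  have ha' : 0 < |a| := abs_pos.2 ha
  have := mul_abs_fst_le_one_of_mem_Rc2 h (1 / |a|) (Real.neg_one_lt_tanh _)
  rw [add_mul, one_div_mul_cancel ha'.ne'] at this
  linarith

namespace NetPath

variable (π : NetPath)

theorem continuous_f : Continuous π.f := by
  rw [funext π.extend]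
  exact π.cont.comp_continuous (by fun_prop)
    fun s => ⟨le_max_left _ _, max_le π.hσ.2 (min_le_right _ _)⟩

theorem f_max_σ (s : ℝ) (hs : s ≤ 1) : π.f (max π.σ s) = π.f s := by
  conv_rhs => rw [π.extend s, min_eq_left hs]

def toProd : ℝ × C(Icc (-1 : ℝ) 1, ℝ) :=
  (π.σ, (⟨π.f, π.continuous_f⟩ : C(ℝ, ℝ)).restrict (Icc (-1) 1))

theorem f_eq_IccExtend : π.f = IccExtend (by norm_num : (-1 : ℝ) ≤ 1) π.toProd.2 := by
  funext s
  have hσ := π.hσ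
  rw [IccExtend_apply]
  change π.f s = π.f (projIcc (-1) 1 (by norm_num) s)
  rw [coe_projIcc, π.extend s, π.extend (max (-1) (min 1 s))]
  congr 1
  simp only [mem_Icc] at hσ
  grind

theorem toProd_injective : Function.Injective toProd := by
  intro π₁ π₂ h
  have hσ : π₁.σ = π₂.σ := congrArg Prod.fst h
  have hf : π₁.f = π₂.f := by rw [f_eq_IccExtend, f_eq_IccExtend, h]
  cases π₁
  cases π₂
  subst hσ hf
  rfl

noncomputable instance : MetricSpace NetPath :=
  MetricSpace.induced toProd toProd_injective inferInstance

theorem isometry_toProd : Isometry toProd := fun _ _ => rfl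

theorem dist_eq (π₁ π₂ : NetPath) :
    dist π₁ π₂ = max |π₁.σ - π₂.σ| (⨆ s : Icc (-1 : ℝ) 1, |π₁.f s - π₂.f s|) := by
  change dist π₁.toProd π₂.toProd = _
  rw [Prod.dist_eq, Real.dist_eq, dist_eq_norm, ContinuousMap.norm_eq_iSup_norm]
  rfl

/-- `projIcc` only retypes `max σ u ∈ [-1, 1]` as a point of the interval. -/
def admissiblePairs : Set (ℝ × C(Icc (-1 : ℝ) 1, ℝ)) :=
  {p | p.1 ∈ Icc (-1) 1 ∧ p.2 ⟨1, by norm_num⟩ = 0 ∧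
    ∀ u, p.2 u = p.2 (projIcc (-1) 1 (by norm_num) (max p.1 u)) ∧ (p.2 u, max p.1 u) ∈ Rc2}

theorem isClosed_admissiblePairs : IsClosed admissiblePairs := by
  simp only [admissiblePairs, ofPred_and, ofPred_forall]
  exact (isClosed_Icc.preimage continuous_fst).inter
    ((isClosed_eq (by fun_prop) continuous_const).inter <| isClosed_iInter fun _ =>
      (isClosed_eq (by fun_prop) (by fun_prop)).inter (isClosed_closure.preimage (by fun_prop)))

theorem toProd_mem_admissiblePairs : π.toProd ∈ admissiblePairs := by
  refine ⟨π.hσ, π.eval_top, fun u => ?_⟩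
  have hu : π.f u = π.f (max π.σ u) := (π.f_max_σ u u.2.2).symm
  refine ⟨?_, ?_⟩
  · change π.f u = π.f (max (-1) (min 1 (max π.σ u)))
    rw [min_eq_right (max_le π.hσ.2 u.2.2), max_eq_right (π.hσ.1.trans (le_max_left _ _)), hu]
  · change (π.f u, _) ∈ Rc2
    rw [hu]
    exact π.mem _ ⟨le_max_left _ _, max_le π.hσ.2 u.2.2⟩

theorem exists_toProd_eq {p : ℝ × C(Icc (-1 : ℝ) 1, ℝ)} (hp : p ∈ admissiblePairs) :
    ∃ π : NetPath, π.toProd = p := by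
  obtain ⟨σ, g⟩ := p
  obtain ⟨hσ, htop, hg⟩ := hp
  have h : (-1 : ℝ) ≤ 1 := by norm_num
  refine ⟨⟨σ, hσ, IccExtend h g, (continuous_IccExtend_iff.2 g.continuous).continuousOn,
    fun s hs => ?_, by rwa [IccExtend_right], fun hσ_bot => ?_, fun s => ?_⟩,
    Prod.ext rfl (ContinuousMap.ext fun u => IccExtend_val h g u)⟩
  · have hs' : s ∈ Icc (-1 : ℝ) 1 := ⟨hσ.1.trans hs.1, hs.2⟩
    simpa [IccExtend_of_mem h g hs', max_eq_right hs.1] using (hg ⟨s, hs'⟩).2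
  · subst hσ_bot
    rw [IccExtend_left]
    exact eq_zero_of_mem_Rc2_neg_one (by simpa using (hg ⟨-1, left_mem_Icc.2 h⟩).2)
  · rw [IccExtend_apply, IccExtend_apply, (hg _).1]
    congr 1
    ext
    simp only [coe_projIcc]
    simp only [mem_Icc] at hσ
    grind

theorem range_toProd : range toProd = admissiblePairs :=
  Subset.antisymm (range_subset_iff.2 toProd_mem_admissiblePairs) fun _ hp => exists_toProd_eq hp

instance : CompleteSpace NetPath := by
  rw [completeSpace_iff_isComplete_range isometry_toProd.isUniformInducing, range_toProd]
  exact isClosed_admissiblePairs.isComplete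

instance : SecondCountableTopology NetPath :=
  isometry_toProd.isUniformInducing.isInducing.secondCountableTopology

end NetPath

/-- **(Π, d) is a complete separable metric space.**  There is a metric on the path
space `Π` whose distance function is
`d(π₁,π₂) = |tanh σ₁ − tanh σ₂| ∨ sup_t |tanh π₁(t∨σ₁)/(1+|t|) − tanh π₂(t∨σ₂)/(1+|t|)|`
(expressed here in compactified coordinates), and with this metric `Π` is complete
and separable. -/
theorem path_space_complete_separable :
    ∃ m : MetricSpace NetPath,
      (∀ π₁ π₂ : NetPath,
        m.toDist.dist π₁ π₂ =
          max |π₁.σ - π₂.σ| (⨆ s : Set.Icc (-1 : ℝ) 1, |π₁.f s - π₂.f s|)) ∧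
      @CompleteSpace NetPath m.toUniformSpace ∧
      @TopologicalSpace.SeparableSpace NetPath m.toUniformSpace.toTopologicalSpace :=
  ⟨inferInstance, NetPath.dist_eq, inferInstance, inferInstance⟩
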